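/- In the mis-specified model case, matching w(β) = v(β) where v(β) = −(b/(2k))β² + ((p+b)/k)β and w(x) = −(ε/(2k))x² + (λ/k)(x − max(0,x−β)) + (ε/k)x yields the constraint force λ = (β/2)(ε − b) + p + b − ε for β ∈ (0,1]. -/

import Mathlib

theorem stmt_16 (k b p ε l β : ℝ) (hk : k ≠ 0) (hβ : β ∈ Set.Ioc (0 : ℝ) 1) :
    (-(ε / (2 * k)) * β ^ 2 + (l / k) * (β - max 0 (β - β)) + (ε / k) * β
        = -(b / (2 * k)) * β ^ 2 + ((p + b) / k) * β)
      ↔ l = (β / 2) * (ε - b) + p + b - ε := by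
  have mismatch : -(ε / (2 * k)) * β ^ 2 + (l / k) * β + (ε / k) * β
      - (-(b / (2 * k)) * β ^ 2 + ((p + b) / k) * β)
      = β / k * (l - ((β / 2) * (ε - b) + p + b - ε)) := by
    ring
  rw [sub_self, max_self, sub_zero, ← sub_eq_zero, mismatch, mul_eq_zero, div_eq_zero_iff,
    sub_eq_zero]
  simp [hβ.1.ne', hk]
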